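/- arXiv:1506.06444 — 2 statements merged into one kernel-verified Lean document; each statement's English description precedes it below -/
import Mathlib

section
/- Let U be an invertible k×k real matrix with unit-vector columns u₁,...,u_k, let A = UᵀU, and let ℓ = ‖Σᵢ uᵢ‖₂ (so 1ᵀA1 = ℓ²). Then the standard Gaussian measure of the cone C = {x ∈ R^k : Uᵀx ≥ 0} satisfies γ(C) ≤ (e/(2πk))^{k/2} · ℓ^k / √det(A). -/
set_option maxHeartbeats 1000000


open MeasureTheory Matrix Real BigOperators

theorem gaussian_measure_cone_bound {k : ℕ} (hk : 0 < k)
    (U : Matrix (Fin k) (Fin k) ℝ) (hU : IsUnit U.det)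
    (hunit : ∀ j, ∑ i, (U i j) ^ 2 = 1)
    (ℓ : ℝ) (hℓ : 0 ≤ ℓ) (hℓ2 : ℓ ^ 2 = ∑ i, (∑ j, U i j) ^ 2) :
    let gauss : Measure (Fin k → ℝ) :=
      volume.withDensity fun x =>
        ENNReal.ofReal (π ^ (-(k : ℝ) / 2) * Real.exp (-∑ i, (x i) ^ 2))
    (gauss {x | ∀ i, 0 ≤ Uᵀ.mulVec x i}).toReal ≤
      (Real.exp 1 / (2 * π * k)) ^ ((k : ℝ) / 2) * ℓ ^ k / Real.sqrt (Uᵀ * U).det := by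
  intro gauss
  have hg0 : gauss = volume.withDensity (fun x =>
      ENNReal.ofReal (π ^ (-(k : ℝ) / 2) * Real.exp (-∑ i, (x i) ^ 2))) := rfl
  rw [hg0]
  have hd : U.det ≠ 0 := hU.ne_zero
  have hk' : (0:ℝ) < k := Nat.cast_pos.mpr hk
  -- ℓ is positive
  have hℓ0 : ℓ ≠ 0 := by
    intro h
    have hz : ∑ i, (∑ j, U i j) ^ 2 = 0 := by
      rw [← hℓ2, h]; ring
    have h2 : ∀ i, (∑ j, U i j) = 0 := by
      intro i
      have := (Finset.sum_eq_zero_iff_of_nonneg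
        (fun i _ => sq_nonneg (∑ j, U i j))).1 hz i (Finset.mem_univ i)
      exact pow_eq_zero_iff (two_ne_zero) |>.1 this
    have hmv : U.mulVec (fun _ => 1) = 0 := by
      funext i
      simpa [Matrix.mulVec, dotProduct] using h2 i
    have hone : (fun _ => (1:ℝ) : Fin k → ℝ) = 0 := by
      have h3 := congrArg (fun w => U⁻¹.mulVec w) hmv
      simpa [Matrix.mulVec_mulVec, Matrix.nonsing_inv_mul U hU] using h3
    exact one_ne_zero (congrFun hone ⟨0, hk⟩)
  have hℓpos : 0 < ℓ := lt_of_le_of_ne hℓ (Ne.symm hℓ0)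
  set c : ℝ := Real.sqrt (2*k) / ℓ with hc_def
  have h2k : (0:ℝ) < 2*k := by positivity
  have hsq : Real.sqrt (2*(k:ℝ)) ^ 2 = 2*(k:ℝ) := Real.sq_sqrt h2k.le
  have hcpos : 0 < c := div_pos (Real.sqrt_pos.2 h2k) hℓpos
  set S : Set (Fin k → ℝ) := {x | ∀ i, 0 ≤ Uᵀ.mulVec x i} with hSdef
  have hmv_meas : ∀ i, Measurable fun x : Fin k → ℝ => Uᵀ.mulVec x i := by
    intro i
    simp only [Matrix.mulVec, dotProduct]
    exact Finset.measurable_sum _ fun j _ => (measurable_pi_apply j).const_mul _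
  have hfmeas : Measurable fun x : Fin k → ℝ => Uᵀ.mulVec x :=
    measurable_pi_lambda _ hmv_meas
  have hSmeas : MeasurableSet S := by
    have hS2 : S = ⋂ i, (fun x : Fin k → ℝ => Uᵀ.mulVec x i) ⁻¹' (Set.Ici 0) := by
      ext x; simp [hSdef, Set.mem_iInter]
    rw [hS2]
    exact MeasurableSet.iInter fun i => (hmv_meas i) measurableSet_Ici
  -- auxiliary one-dimensional function
  set h : ℝ → ℝ := (Set.Ici (0:ℝ)).indicator (fun u => Real.exp (-(c*u))) with hh_def
  have hhmeas : Measurable h :=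
    Measurable.indicator ((measurable_id.const_mul c).neg.exp) measurableSet_Ici
  set g : (Fin k → ℝ) → ℝ := fun y => ∏ i, h (y i) with hg_def
  have hgmeas : Measurable g :=
    Finset.measurable_prod _ fun i _ => hhmeas.comp (measurable_pi_apply i)
  have hgnn : ∀ y, 0 ≤ g y := fun y => Finset.prod_nonneg fun i _ =>
    Set.indicator_nonneg (fun u _ => (Real.exp_pos _).le) _
  have hhint : Integrable h := by
    rw [hh_def, integrable_indicator_iff measurableSet_Ici]
    rw [integrableOn_Ici_iff_integrableOn_Ioi]
    simpa [neg_mul] using exp_neg_integrableOn_Ioi 0 hcpos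
  have hInth : ∫ u, h u = c⁻¹ := by
    rw [hh_def, MeasureTheory.integral_indicator measurableSet_Ici,
      MeasureTheory.integral_Ici_eq_integral_Ioi]
    have h5 := integral_comp_mul_left_Ioi (fun u => Real.exp (-u)) 0 hcpos
    simp only [mul_zero] at h5
    rw [h5, integral_exp_neg_Ioi_zero]
    simp
  have hgint : Integrable g := Integrable.fintype_prod (f := fun _ : Fin k => h) fun _ => hhint
  have hIntg : ∫ y : Fin k → ℝ, g y = (c⁻¹)^k := by
    rw [hg_def]
    beta_reduce
    rw [volume_pi, MeasureTheory.integral_fintype_prod_eq_pow (ι := Fin k) h, hInth]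
    simp
  -- change of variables
  have hmap : Measure.map (fun x : Fin k → ℝ => Uᵀ.mulVec x) volume
      = ENNReal.ofReal |U.det⁻¹| • volume := by
    have hdetL : LinearMap.det (Matrix.toLin' Uᵀ) ≠ 0 := by
      rw [LinearMap.det_toLin', Matrix.det_transpose]; exact hd
    have hmain := Real.map_linearMap_volume_pi_eq_smul_volume_pi hdetL
    rw [LinearMap.det_toLin', Matrix.det_transpose] at hmain
    have hcoe : (⇑(Matrix.toLin' Uᵀ) : (Fin k → ℝ) → (Fin k → ℝ))
        = fun x => Uᵀ.mulVec x := by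
      funext x; exact Matrix.toLin'_apply _ _
    rw [← hcoe]; exact hmain
  have key : ∫⁻ x, ENNReal.ofReal (g (Uᵀ.mulVec x)) ∂volume
      = ENNReal.ofReal |U.det⁻¹| * ENNReal.ofReal ((c⁻¹)^k) := by
    have hGmeas : Measurable fun y : Fin k → ℝ => ENNReal.ofReal (g y) :=
      ENNReal.measurable_ofReal.comp hgmeas
    rw [← MeasureTheory.lintegral_map hGmeas hfmeas, hmap, lintegral_smul_measure]
    congr 1
    rw [← MeasureTheory.ofReal_integral_eq_lintegral_ofReal hgint (ae_of_all _ hgnn), hIntg]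
  -- pointwise bound on S
  have hpt : ∀ x ∈ S, ENNReal.ofReal (π ^ (-(k:ℝ)/2) * Real.exp (-∑ i, (x i)^2))
      ≤ ENNReal.ofReal (π ^ (-(k:ℝ)/2) * Real.exp ((k:ℝ)/2)) *
        ENNReal.ofReal (g (Uᵀ.mulVec x)) := by
    intro x hx
    have hxS : ∀ i, 0 ≤ Uᵀ.mulVec x i := hx
    have hgx : g (Uᵀ.mulVec x) = Real.exp (-(c * ∑ i, Uᵀ.mulVec x i)) := by
      rw [hg_def]
      calc ∏ i, h (Uᵀ.mulVec x i) = ∏ i, Real.exp (-(c * Uᵀ.mulVec x i)) := by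
            refine Finset.prod_congr rfl fun i _ => ?_
            exact Set.indicator_of_mem (hxS i) _
        _ = Real.exp (∑ i, -(c * Uᵀ.mulVec x i)) := (Real.exp_sum _ _).symm
        _ = Real.exp (-(c * ∑ i, Uᵀ.mulVec x i)) := by
            congr 1
            rw [Finset.mul_sum]
            simp
    rw [hgx, ← ENNReal.ofReal_mul (by positivity)]
    apply ENNReal.ofReal_le_ofReal
    rw [mul_assoc, ← Real.exp_add]
    refine mul_le_mul_of_nonneg_left ?_ (by positivity)
    apply Real.exp_le_exp.2
    set s := ∑ i, Uᵀ.mulVec x i with hs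
    have hsval : s = ∑ j, (∑ i, U j i) * x j := by
      rw [hs]
      simp only [Matrix.mulVec, dotProduct, Matrix.transpose_apply]
      rw [Finset.sum_comm]
      exact Finset.sum_congr rfl fun j _ => (Finset.sum_mul _ _ _).symm
    have hCS : s^2 ≤ ℓ^2 * ∑ j, (x j)^2 := by
      rw [hsval, hℓ2]
      exact Finset.sum_mul_sq_le_sq_mul_sq _ _ _
    have hcs : c * s ≤ (k:ℝ)/2 + ∑ i, (x i)^2 := by
      rw [hc_def, div_mul_eq_mul_div, div_le_iff₀ hℓpos]
      nlinarith [sq_nonneg (2*s - ℓ * Real.sqrt (2*(k:ℝ))), hCS, hsq, hℓpos,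
        Real.sqrt_nonneg (2*(k:ℝ)), sq_nonneg ℓ]
    linarith
  -- main estimate
  have hmain : (volume.withDensity (fun x =>
      ENNReal.ofReal (π ^ (-(k : ℝ) / 2) * Real.exp (-∑ i, (x i) ^ 2)))) S ≤
      ENNReal.ofReal (π ^ (-(k:ℝ)/2) * Real.exp ((k:ℝ)/2)) *
      (ENNReal.ofReal |U.det⁻¹| * ENNReal.ofReal ((c⁻¹)^k)) := by
    rw [withDensity_apply _ hSmeas]
    have hGf : Measurable fun x : Fin k → ℝ =>
        ENNReal.ofReal (π ^ (-(k:ℝ)/2) * Real.exp ((k:ℝ)/2)) *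
        ENNReal.ofReal (g (Uᵀ.mulVec x)) :=
      measurable_const.mul (ENNReal.measurable_ofReal.comp (hgmeas.comp hfmeas))
    calc ∫⁻ x in S, ENNReal.ofReal (π ^ (-(k:ℝ)/2) * Real.exp (-∑ i, (x i)^2)) ∂volume
        ≤ ∫⁻ x in S, ENNReal.ofReal (π ^ (-(k:ℝ)/2) * Real.exp ((k:ℝ)/2)) *
            ENNReal.ofReal (g (Uᵀ.mulVec x)) ∂volume := setLIntegral_mono hGf hpt
      _ ≤ ∫⁻ x, ENNReal.ofReal (π ^ (-(k:ℝ)/2) * Real.exp ((k:ℝ)/2)) *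
            ENNReal.ofReal (g (Uᵀ.mulVec x)) ∂volume := setLIntegral_le_lintegral _ _
      _ = ENNReal.ofReal (π ^ (-(k:ℝ)/2) * Real.exp ((k:ℝ)/2)) *
            ∫⁻ x, ENNReal.ofReal (g (Uᵀ.mulVec x)) ∂volume :=
          lintegral_const_mul _ (ENNReal.measurable_ofReal.comp (hgmeas.comp hfmeas))
      _ = _ := by rw [key]
  -- final arithmetic
  have hd2 : Real.sqrt ((Uᵀ*U).det) = |U.det| := by
    rw [Matrix.det_mul, Matrix.det_transpose, ← sq, Real.sqrt_sq_eq_abs]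
  have hdpos : (0:ℝ) < |U.det| := abs_pos.2 hd
  have hpow : (Real.sqrt (2*(k:ℝ)))^k = (2*(k:ℝ)) ^ ((k:ℝ)/2) := by
    rw [Real.sqrt_eq_rpow, ← Real.rpow_natCast ((2*(k:ℝ)) ^ ((1:ℝ)/2)) k,
      ← Real.rpow_mul h2k.le]
    congr 1
    ring
  have h2kpos : (0:ℝ) < (2*(k:ℝ)) ^ ((k:ℝ)/2) := Real.rpow_pos_of_pos h2k _
  have hπpos : (0:ℝ) < π ^ ((k:ℝ)/2) := Real.rpow_pos_of_pos Real.pi_pos _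
  have heqR : π ^ (-(k:ℝ)/2) * Real.exp ((k:ℝ)/2) * (|U.det⁻¹| * (c⁻¹)^k)
      = (Real.exp 1 / (2 * π * k)) ^ ((k:ℝ)/2) * ℓ ^ k / Real.sqrt ((Uᵀ*U).det) := by
    rw [hd2, abs_inv]
    have hbase : Real.exp 1 / (2 * π * (k:ℝ)) = Real.exp 1 / (π * (2*(k:ℝ))) := by ring_nf
    rw [hbase, Real.div_rpow (Real.exp_pos 1).le (by positivity),
      Real.exp_one_rpow, Real.mul_rpow Real.pi_pos.le h2k.le]
    have hcinvk : (c⁻¹)^k = ℓ^k / (2*(k:ℝ)) ^ ((k:ℝ)/2) := by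
      rw [hc_def, inv_div, div_pow, hpow]
    rw [hcinvk]
    have hπneg : π ^ (-(k:ℝ)/2) = (π ^ ((k:ℝ)/2))⁻¹ := by
      rw [neg_div, Real.rpow_neg Real.pi_pos.le]
    rw [hπneg]
    field_simp
  refine ENNReal.toReal_le_of_le_ofReal (by positivity) ?_
  refine hmain.trans (le_of_eq ?_)
  rw [← ENNReal.ofReal_mul (by positivity), ← ENNReal.ofReal_mul (by positivity), heqR]
end

section
/- Fix integers k ≥ 4 with ℓ := √k an integer and χ := k - ℓ ≥ 2. Define a distribution μ on [χ]^k as follows: sample a uniformly random subset S ⊆ [k] with |S| = χ, a uniformly random bijection π : S → [χ], and a uniformly random y ∈ [χ]; output x with xᵢ = π(i) for i ∈ S and xᵢ = y otherwise. Then μ is balanced pairwise independent: for all i ≠ j in [k] and all a, b ∈ [χ], Pr_{x~μ}[xᵢ = a and xⱼ = b] = 1/χ². -/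
open BigOperators

/-- Sample space for the rainbow pairwise-independence construction:
a subset `S` of `[k]` of size `χ`, a bijection from `S` to `[χ]`, and `y ∈ [χ]`. -/
def RainbowOmega (k χ : ℕ) : Type :=
  Σ S : {S : Finset (Fin k) // S.card = χ}, ({x : Fin k // x ∈ S.1} ≃ Fin χ) × Fin χ

noncomputable instance (k χ : ℕ) : Fintype (RainbowOmega k χ) := by
  unfold RainbowOmega; infer_instance

/-- The output string of an outcome. -/
def rainbowString {k χ : ℕ} (ω : RainbowOmega k χ) : Fin k → Fin χ :=
  fun i => if h : i ∈ ω.1.1 then ω.2.1 ⟨i, h⟩ else ω.2.2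

section Helpers

open Finset Nat

lemma card_filter_sigma' {ι : Type*} {β : ι → Type*} [Fintype ι] [∀ i, Fintype (β i)]
    (p : (Σ i, β i) → Prop) [DecidablePred p] :
    (Finset.univ.filter p).card = ∑ i, (Finset.univ.filter fun y : β i => p ⟨i, y⟩).card := by
  rw [Finset.card_filter, ← Finset.univ_sigma_univ, Finset.sum_sigma]
  exact Finset.sum_congr rfl fun i _ => (Finset.card_filter _ _).symm

lemma card_filter_fst_snd {γ δ : Type*} [Fintype γ] [Fintype δ] (p : γ → Prop) (q : δ → Prop)
    [DecidablePred p] [DecidablePred q] :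
    (Finset.univ.filter fun x : γ × δ => p x.1 ∧ q x.2).card
      = (Finset.univ.filter p).card * (Finset.univ.filter q).card := by
  rw [← Finset.univ_product_univ, Finset.filter_product]
  exact Finset.card_product _ _

lemma card_filter_fst {γ δ : Type*} [Fintype γ] [Fintype δ] (p : γ → Prop) [DecidablePred p] :
    (Finset.univ.filter fun x : γ × δ => p x.1).card
      = (Finset.univ.filter p).card * Fintype.card δ := by
  have h2 := card_filter_fst_snd (δ := δ) p (fun _ => True)
  simp only [filter_true, Finset.card_univ] at h2
  rw [← h2]
  congr 1
  ext x
  simp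

lemma card_filter_snd {γ δ : Type*} [Fintype γ] [Fintype δ] (q : δ → Prop) [DecidablePred q] :
    (Finset.univ.filter fun x : γ × δ => q x.2).card
      = Fintype.card γ * (Finset.univ.filter q).card := by
  have h2 := card_filter_fst_snd (γ := γ) (fun _ => True) q
  simp only [filter_true, Finset.card_univ] at h2
  rw [← h2]
  congr 1
  ext x
  simp

lemma perm_fiber_const {α : Type*} [Fintype α] [DecidableEq α] {n : ℕ} (u : α) (a a' : Fin n) :
    (Finset.univ.filter fun e : α ≃ Fin n => e u = a').card
      = (Finset.univ.filter fun e : α ≃ Fin n => e u = a).card := by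
  apply Finset.card_nbij' (fun e => e.trans (Equiv.swap a' a)) (fun e => e.trans (Equiv.swap a' a))
  · intro e he
    simp only [mem_coe, mem_filter, mem_univ, true_and] at he ⊢
    simp [he]
  · intro e he
    simp only [mem_coe, mem_filter, mem_univ, true_and] at he ⊢
    simp [he, Equiv.swap_apply_right]
  · intro e _
    ext x
    simp
  · intro e _
    ext x
    simp

lemma perm_count_one {α : Type*} [Fintype α] [DecidableEq α] {n : ℕ} (h : Fintype.card α = n) (u : α)
    (a : Fin n) :
    (Finset.univ.filter fun e : α ≃ Fin n => e u = a).card * n = n ! := by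
  have htot : Fintype.card (α ≃ Fin n) = n ! := by
    rw [Fintype.card_equiv (Fintype.equivFinOfCardEq h), h]
  have hsum : ∑ a' : Fin n, (Finset.univ.filter fun e : α ≃ Fin n => e u = a').card = n ! := by
    rw [← htot, ← Finset.card_univ]
    exact (Finset.card_eq_sum_card_fiberwise fun e _ => Finset.mem_univ (e u)).symm
  rw [← hsum]
  rw [Finset.sum_congr rfl fun a' _ => perm_fiber_const u a a']
  simp [Finset.card_univ, mul_comm]

lemma perm_fiber2_const {α : Type*} [Fintype α] [DecidableEq α] {n : ℕ} (u v : α) (a b b' : Fin n)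
    (hab : a ≠ b) (hab' : a ≠ b') :
    (Finset.univ.filter fun e : α ≃ Fin n => e u = a ∧ e v = b').card
      = (Finset.univ.filter fun e : α ≃ Fin n => e u = a ∧ e v = b).card := by
  apply Finset.card_nbij' (fun e => e.trans (Equiv.swap b' b)) (fun e => e.trans (Equiv.swap b' b))
  · intro e he
    simp only [mem_coe, mem_filter, mem_univ, true_and] at he ⊢
    simp [he.1, he.2, Equiv.swap_apply_of_ne_of_ne hab' hab]
  · intro e he
    simp only [mem_coe, mem_filter, mem_univ, true_and] at he ⊢
    simp [he.1, he.2, Equiv.swap_apply_of_ne_of_ne hab' hab, Equiv.swap_apply_right]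
  · intro e _
    ext x
    simp
  · intro e _
    ext x
    simp

lemma perm_count_eq_zero {α : Type*} [Fintype α] [DecidableEq α] {n : ℕ} {u v : α} (huv : u ≠ v) (a : Fin n) :
    (Finset.univ.filter fun e : α ≃ Fin n => e u = a ∧ e v = a).card = 0 := by
  rw [Finset.card_eq_zero, Finset.filter_eq_empty_iff]
  rintro e - ⟨h1, h2⟩
  exact huv (e.injective (h1.trans h2.symm))

lemma perm_count_two {α : Type*} [Fintype α] [DecidableEq α] {n : ℕ} (h : Fintype.card α = n) {u v : α}
    (huv : u ≠ v) {a b : Fin n} (hab : a ≠ b) :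
    (Finset.univ.filter fun e : α ≃ Fin n => e u = a ∧ e v = b).card * (n * (n - 1)) = n ! := by
  have h1 : (Finset.univ.filter fun e : α ≃ Fin n => e u = a).card
      = ∑ b' : Fin n, (Finset.univ.filter fun e : α ≃ Fin n => e u = a ∧ e v = b').card := by
    rw [Finset.card_eq_sum_card_fiberwise (f := fun e : α ≃ Fin n => e v)
      (t := Finset.univ) (fun e _ => Finset.mem_univ _)]
    apply Finset.sum_congr rfl
    intro b' _
    congr 1
    rw [Finset.filter_filter]
  have h2 : ∑ b' : Fin n, (Finset.univ.filter fun e : α ≃ Fin n => e u = a ∧ e v = b').card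
      = (n - 1) * (Finset.univ.filter fun e : α ≃ Fin n => e u = a ∧ e v = b).card := by
    rw [← Finset.add_sum_erase _ _ (Finset.mem_univ a), perm_count_eq_zero huv, zero_add]
    rw [Finset.sum_congr rfl fun b' hb' =>
      perm_fiber2_const u v a b b' hab (Ne.symm (Finset.mem_erase.mp hb').1)]
    rw [Finset.sum_const, Finset.card_erase_of_mem (Finset.mem_univ a), Finset.card_univ,
      Fintype.card_fin, smul_eq_mul]
  have h3 := perm_count_one h u a
  rw [h1, h2] at h3
  rw [← h3]
  ring

lemma perm_count_one' {α : Type*} [Fintype α] [DecidableEq α] {n : ℕ} (h : Fintype.card α = n) (u : α)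
    (a : Fin n) (hn : 0 < n) :
    (Finset.univ.filter fun e : α ≃ Fin n => e u = a).card = (n - 1)! := by
  have h1 := perm_count_one h u a
  rw [← Nat.mul_factorial_pred hn.ne', mul_comm n _] at h1
  exact Nat.eq_of_mul_eq_mul_right hn h1

lemma perm_count_two' {α : Type*} [Fintype α] [DecidableEq α] {n : ℕ} (h : Fintype.card α = n) {u v : α}
    (huv : u ≠ v) {a b : Fin n} (hab : a ≠ b) (hn : 2 ≤ n) :
    (Finset.univ.filter fun e : α ≃ Fin n => e u = a ∧ e v = b).card = (n - 2)! := by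
  have h1 := perm_count_two h huv hab
  have hfac : n ! = (n - 2)! * (n * (n - 1)) := by
    obtain ⟨m, rfl⟩ : ∃ m, n = m + 2 := ⟨n - 2, by omega⟩
    have e1 : m + 2 - 2 = m := by omega
    have e2 : m + 2 - 1 = m + 1 := by omega
    rw [e1, e2]
    calc (m + 2)! = (m + 2) * ((m + 1) * m !) := by rw [Nat.factorial_succ, Nat.factorial_succ]
    _ = m ! * ((m + 2) * (m + 1)) := by ring
  rw [hfac] at h1
  exact Nat.eq_of_mul_eq_mul_right (by apply Nat.mul_pos <;> omega) h1

lemma cardA_lemma {k χ : ℕ} (hχ2 : 2 ≤ χ) {i j : Fin k} (hij : i ≠ j) :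
    ((Finset.univ.powersetCard χ).filter fun S : Finset (Fin k) => i ∈ S ∧ j ∈ S).card
      = (k - 2).choose (χ - 2) := by
  have hcard2 : ((Finset.univ.erase i).erase j).card = k - 2 := by
    rw [Finset.card_erase_of_mem (Finset.mem_erase.mpr ⟨hij.symm, Finset.mem_univ j⟩),
      Finset.card_erase_of_mem (Finset.mem_univ i), Finset.card_univ, Fintype.card_fin]
    omega
  rw [← hcard2, ← Finset.card_powersetCard]
  apply Finset.card_nbij' (fun S => (S.erase i).erase j) (fun T => insert i (insert j T))
  · intro S hS
    simp only [mem_coe, Finset.mem_filter, Finset.mem_powersetCard] at hS ⊢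
    obtain ⟨⟨-, hSc⟩, hiS, hjS⟩ := hS
    constructor
    · exact Finset.erase_subset_erase j (Finset.erase_subset_erase i (Finset.subset_univ S))
    · rw [Finset.card_erase_of_mem (Finset.mem_erase.mpr ⟨hij.symm, hjS⟩),
        Finset.card_erase_of_mem hiS, hSc]
      omega
  · intro T hT
    simp only [mem_coe, Finset.mem_powersetCard] at hT
    obtain ⟨hTsub, hTc⟩ := hT
    have hiT : i ∉ T := fun h => (Finset.mem_erase.mp (Finset.mem_of_mem_erase (hTsub h))).1 rfl
    have hjT : j ∉ T := fun h => (Finset.mem_erase.mp (hTsub h)).1 rfl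
    have hinj : i ∉ insert j T := by simp [hij, hiT]
    simp only [mem_coe, Finset.mem_filter, Finset.mem_powersetCard]
    refine ⟨⟨Finset.subset_univ _, ?_⟩, Finset.mem_insert_self _ _,
      Finset.mem_insert_of_mem (Finset.mem_insert_self _ _)⟩
    rw [Finset.card_insert_of_notMem hinj, Finset.card_insert_of_notMem hjT, hTc]
    omega
  · intro S hS
    simp only [mem_coe, Finset.mem_filter] at hS
    obtain ⟨-, hiS, hjS⟩ := hS
    dsimp only
    rw [Finset.insert_erase (Finset.mem_erase.mpr ⟨hij.symm, hjS⟩),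
      Finset.insert_erase hiS]
  · intro T hT
    simp only [mem_coe, Finset.mem_powersetCard] at hT
    obtain ⟨hTsub, hTc⟩ := hT
    have hiT : i ∉ T := fun h => (Finset.mem_erase.mp (Finset.mem_of_mem_erase (hTsub h))).1 rfl
    have hjT : j ∉ T := fun h => (Finset.mem_erase.mp (hTsub h)).1 rfl
    have hinj : i ∉ insert j T := by simp [hij, hiT]
    dsimp only
    rw [Finset.erase_insert hinj, Finset.erase_insert hjT]

lemma cardC_lemma {k χ : ℕ} {i j : Fin k} (hij : i ≠ j) :
    ((Finset.univ.powersetCard χ).filter fun S : Finset (Fin k) => i ∉ S ∧ j ∉ S).card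
      = (k - 2).choose χ := by
  have hcard2 : ((Finset.univ.erase i).erase j).card = k - 2 := by
    rw [Finset.card_erase_of_mem (Finset.mem_erase.mpr ⟨hij.symm, Finset.mem_univ j⟩),
      Finset.card_erase_of_mem (Finset.mem_univ i), Finset.card_univ, Fintype.card_fin]
    omega
  rw [← hcard2, ← Finset.card_powersetCard]
  congr 1
  ext S
  simp only [Finset.mem_filter, Finset.mem_powersetCard, Finset.subset_erase,
    Finset.subset_univ, true_and]
  tauto

lemma cardB_lemma {k χ : ℕ} {i j : Fin k} (hij : i ≠ j) :
    ((Finset.univ.powersetCard χ).filter fun S : Finset (Fin k) => i ∈ S ∧ j ∉ S).card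
      = ((Finset.univ.powersetCard χ).filter fun S : Finset (Fin k) => i ∉ S ∧ j ∈ S).card := by
  apply Finset.card_nbij' (fun S => S.map (Equiv.swap i j).toEmbedding)
    (fun S => S.map (Equiv.swap i j).toEmbedding)
  · intro S hS
    simp only [mem_coe, Finset.mem_filter, Finset.mem_powersetCard, Finset.subset_univ,
      true_and, Finset.mem_map_equiv, Finset.card_map] at hS ⊢
    simp [Equiv.swap_apply_left, Equiv.swap_apply_right]; tauto
  · intro S hS
    simp only [mem_coe, Finset.mem_filter, Finset.mem_powersetCard, Finset.subset_univ,
      true_and, Finset.mem_map_equiv, Finset.card_map] at hS ⊢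
    simp [Equiv.swap_apply_left, Equiv.swap_apply_right]; tauto
  · intro S _
    ext x
    simp [Finset.mem_map_equiv]
  · intro S _
    ext x
    simp [Finset.mem_map_equiv]

lemma chooseAC {k l χ : ℕ} (hk : 4 ≤ k) (hℓ : l * l = k) (hχ : χ = k - l) (hχ2 : 2 ≤ χ) :
    (k - 2).choose (χ - 2) = (k - 2).choose χ * (χ - 1) := by
  have hl2 : 2 ≤ l := by
    rcases l with _ | _ | m
    · omega
    · omega
    · exact le_add_self
  obtain ⟨m, rfl⟩ : ∃ m, l = m + 2 := ⟨l - 2, by omega⟩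
  have hk' : k = (m + 2) * (m + 1) + (m + 2) := by rw [← hℓ]; ring
  have hχP : χ = (m + 2) * (m + 1) := by rw [hχ, hk', Nat.add_sub_cancel]
  have hkχ : k = χ + (m + 2) := by rw [hk', ← hχP]
  obtain ⟨c, hc⟩ : ∃ c, χ = c + 2 := ⟨χ - 2, by omega⟩
  clear hk' hℓ hχ
  have hn1 : k - 2 - c = m + 2 := by omega
  have hn2 : k - 2 - (c + 1) = m + 1 := by omega
  have e1 := Nat.choose_succ_right_eq (k - 2) c
  have e2 := Nat.choose_succ_right_eq (k - 2) (c + 1)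
  rw [hn1] at e1
  rw [hn2] at e2
  rw [hc]
  have h2 : c + 2 - 2 = c := by omega
  have h1 : c + 2 - 1 = c + 1 := by omega
  rw [h2, h1]
  set A := (k - 2).choose c
  set B := (k - 2).choose (c + 1)
  set CC := (k - 2).choose (c + 2)
  have key : (CC * (c + 1)) * (c + 2) = A * (c + 2) := by
    calc (CC * (c + 1)) * (c + 2) = (CC * (c + 2)) * (c + 1) := by ring
    _ = (B * (m + 1)) * (c + 1) := by rw [e2]
    _ = (B * (c + 1)) * (m + 1) := by ring
    _ = (A * (m + 2)) * (m + 1) := by rw [e1]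
    _ = A * ((m + 2) * (m + 1)) := by ring
    _ = A * (c + 2) := by rw [← hχP, hc]
  exact (Nat.eq_of_mul_eq_mul_right (by omega) key).symm

end Helpers

open Classical in
theorem rainbow_pairwise_independent {k ℓ χ : ℕ}
    (hk : 4 ≤ k) (hℓ : ℓ * ℓ = k) (hχ : χ = k - ℓ) (hχ2 : 2 ≤ χ) :
    ∀ i j : Fin k, i ≠ j → ∀ a b : Fin χ,
      (Finset.univ.filter fun ω : RainbowOmega k χ =>
          rainbowString ω i = a ∧ rainbowString ω j = b).card * χ ^ 2 =
        Fintype.card (RainbowOmega k χ) := by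
  intro i j hij a b
  have hχpos : 0 < χ := by omega
  -- Step 1: decompose the filter card over the sigma type
  have hN : (Finset.univ.filter fun ω : RainbowOmega k χ =>
      rainbowString ω i = a ∧ rainbowString ω j = b).card
      = ∑ S : {S : Finset (Fin k) // S.card = χ},
          (Finset.univ.filter fun q : ({x : Fin k // x ∈ S.1} ≃ Fin χ) × Fin χ =>
            rainbowString ⟨S, q⟩ i = a ∧ rainbowString ⟨S, q⟩ j = b).card :=
    card_filter_sigma'
      (β := fun S : {S : Finset (Fin k) // S.card = χ} =>
        ({x : Fin k // x ∈ S.1} ≃ Fin χ) × Fin χ)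
      (fun ω => rainbowString ω i = a ∧ rainbowString ω j = b)
  -- the per-subset count
  set F : Finset (Fin k) → ℕ := fun s =>
    if i ∈ s then
      (if j ∈ s then (if a = b then 0 else Nat.factorial (χ - 2) * χ)
       else Nat.factorial (χ - 1))
    else
      (if j ∈ s then Nat.factorial (χ - 1)
       else (if a = b then Nat.factorial χ else 0)) with hF
  have hcnt : ∀ S : {S : Finset (Fin k) // S.card = χ},
      (Finset.univ.filter fun q : ({x : Fin k // x ∈ S.1} ≃ Fin χ) × Fin χ =>
        rainbowString ⟨S, q⟩ i = a ∧ rainbowString ⟨S, q⟩ j = b).card = F S.1 := by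
    rintro ⟨s, hs⟩
    have hcard : Fintype.card {x : Fin k // x ∈ s} = χ := by
      simpa [Fintype.card_subtype] using hs
    simp only [rainbowString, hF]
    by_cases hi : i ∈ s <;> by_cases hj : j ∈ s <;>
      simp only [hi, hj, dif_pos, dif_neg, if_pos, if_neg, not_false_iff, if_true, if_false]
    · -- both in s
      have huv : (⟨i, hi⟩ : {x : Fin k // x ∈ s}) ≠ ⟨j, hj⟩ := by
        intro h; exact hij (congrArg Subtype.val h)
      rw [card_filter_fst (δ := Fin χ)
        (p := fun e : {x : Fin k // x ∈ s} ≃ Fin χ => e ⟨i, hi⟩ = a ∧ e ⟨j, hj⟩ = b),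
        Fintype.card_fin]
      by_cases hab : a = b
      · subst hab
        rw [perm_count_eq_zero huv a, if_pos rfl, zero_mul]
      · rw [perm_count_two' hcard huv hab hχ2, if_neg hab]
    · -- i in s, j not
      rw [card_filter_fst_snd (p := fun e : {x : Fin k // x ∈ s} ≃ Fin χ => e ⟨i, hi⟩ = a)
        (q := fun y : Fin χ => y = b),
        perm_count_one' hcard ⟨i, hi⟩ a hχpos]
      simp [Finset.filter_eq']
    · -- j in s, i not
      have hswap : (Finset.univ.filter fun q : ({x : Fin k // x ∈ s} ≃ Fin χ) × Fin χ =>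
            q.2 = a ∧ q.1 ⟨j, hj⟩ = b).card
          = (Finset.univ.filter fun q : ({x : Fin k // x ∈ s} ≃ Fin χ) × Fin χ =>
            q.1 ⟨j, hj⟩ = b ∧ q.2 = a).card := by
        congr 1
        ext q
        simp [and_comm]
      rw [hswap, card_filter_fst_snd (p := fun e : {x : Fin k // x ∈ s} ≃ Fin χ => e ⟨j, hj⟩ = b)
        (q := fun y : Fin χ => y = a),
        perm_count_one' hcard ⟨j, hj⟩ b hχpos]
      simp [Finset.filter_eq']
    · -- neither
      rw [card_filter_snd (γ := {x : Fin k // x ∈ s} ≃ Fin χ)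
        (q := fun y : Fin χ => y = a ∧ y = b)]
      have hE : Fintype.card ({x : Fin k // x ∈ s} ≃ Fin χ) = Nat.factorial χ := by
        rw [Fintype.card_equiv (Fintype.equivFinOfCardEq hcard), hcard]
      rw [hE]
      by_cases hab : a = b
      · subst hab
        rw [if_pos rfl]
        have : (Finset.univ.filter fun y : Fin χ => y = a ∧ y = a)
            = (Finset.univ.filter fun y : Fin χ => y = a) := by
          ext y; simp
        rw [this]
        simp [Finset.filter_eq']
      · rw [if_neg hab]
        have : (Finset.univ.filter fun y : Fin χ => y = a ∧ y = b) = ∅ := by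
          rw [Finset.filter_eq_empty_iff]
          rintro y - ⟨h1, h2⟩
          exact hab (h1.symm.trans h2)
        rw [this]
        simp
  -- convert sum over subtype to sum over powersetCard
  set P : Finset (Finset (Fin k)) := Finset.univ.powersetCard χ with hP
  have hmemP : ∀ s : Finset (Fin k), s ∈ P ↔ s.card = χ := by
    intro s; simp [hP, Finset.mem_powersetCard]
  have hsubty : ∑ s ∈ P, F s = ∑ S : {S : Finset (Fin k) // S.card = χ}, F S.1 :=
    Finset.sum_subtype P hmemP F
  -- split a sum over P into the four membership cases
  have hsplit : ∀ G : Finset (Fin k) → ℕ, ∑ s ∈ P, G s =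
      (∑ s ∈ P.filter (fun s => i ∈ s ∧ j ∈ s), G s
        + ∑ s ∈ P.filter (fun s => i ∈ s ∧ j ∉ s), G s)
      + (∑ s ∈ P.filter (fun s => i ∉ s ∧ j ∈ s), G s
        + ∑ s ∈ P.filter (fun s => i ∉ s ∧ j ∉ s), G s) := by
    intro G
    rw [← Finset.sum_filter_add_sum_filter_not P (fun s => i ∈ s) G,
      ← Finset.sum_filter_add_sum_filter_not (P.filter (fun s => i ∈ s)) (fun s => j ∈ s) G,
      ← Finset.sum_filter_add_sum_filter_not (P.filter (fun s => ¬ i ∈ s)) (fun s => j ∈ s) G,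
      Finset.filter_filter, Finset.filter_filter, Finset.filter_filter, Finset.filter_filter]
  set A := (P.filter (fun s => i ∈ s ∧ j ∈ s)).card with hAdef
  set Bi := (P.filter (fun s => i ∈ s ∧ j ∉ s)).card with hBidef
  set Bj := (P.filter (fun s => i ∉ s ∧ j ∈ s)).card with hBjdef
  set CC := (P.filter (fun s => i ∉ s ∧ j ∉ s)).card with hCdef
  -- evaluate the four partial sums of F
  have hsum1 : ∑ s ∈ P.filter (fun s => i ∈ s ∧ j ∈ s), F s
      = A * (if a = b then 0 else Nat.factorial (χ - 2) * χ) := by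
    have h : ∀ s ∈ P.filter (fun s => i ∈ s ∧ j ∈ s), F s
        = (if a = b then 0 else Nat.factorial (χ - 2) * χ) := by
      intro s hs
      obtain ⟨-, h1, h2⟩ := Finset.mem_filter.mp hs
      simp only [hF, if_pos h1, if_pos h2]
    rw [Finset.sum_congr rfl h, Finset.sum_const, smul_eq_mul]
  have hsum2 : ∑ s ∈ P.filter (fun s => i ∈ s ∧ j ∉ s), F s
      = Bi * Nat.factorial (χ - 1) := by
    have h : ∀ s ∈ P.filter (fun s => i ∈ s ∧ j ∉ s), F s = Nat.factorial (χ - 1) := by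
      intro s hs
      obtain ⟨-, h1, h2⟩ := Finset.mem_filter.mp hs
      simp only [hF, if_pos h1, if_neg h2]
    rw [Finset.sum_congr rfl h, Finset.sum_const, smul_eq_mul]
  have hsum3 : ∑ s ∈ P.filter (fun s => i ∉ s ∧ j ∈ s), F s
      = Bj * Nat.factorial (χ - 1) := by
    have h : ∀ s ∈ P.filter (fun s => i ∉ s ∧ j ∈ s), F s = Nat.factorial (χ - 1) := by
      intro s hs
      obtain ⟨-, h1, h2⟩ := Finset.mem_filter.mp hs
      simp only [hF, if_neg h1, if_pos h2]
    rw [Finset.sum_congr rfl h, Finset.sum_const, smul_eq_mul]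
  have hsum4 : ∑ s ∈ P.filter (fun s => i ∉ s ∧ j ∉ s), F s
      = CC * (if a = b then Nat.factorial χ else 0) := by
    have h : ∀ s ∈ P.filter (fun s => i ∉ s ∧ j ∉ s), F s
        = (if a = b then Nat.factorial χ else 0) := by
      intro s hs
      obtain ⟨-, h1, h2⟩ := Finset.mem_filter.mp hs
      simp only [hF, if_neg h1, if_neg h2]
    rw [Finset.sum_congr rfl h, Finset.sum_const, smul_eq_mul]
  -- total count of the sample space
  have hcardS : ∀ S : {S : Finset (Fin k) // S.card = χ},
      Fintype.card (({x : Fin k // x ∈ S.1} ≃ Fin χ) × Fin χ) = Nat.factorial χ * χ := by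
    rintro ⟨s, hs⟩
    have hcard : Fintype.card {x : Fin k // x ∈ s} = χ := by
      simpa [Fintype.card_subtype] using hs
    rw [Fintype.card_prod, Fintype.card_equiv (Fintype.equivFinOfCardEq hcard), hcard,
      Fintype.card_fin]
  have hΩ : Fintype.card (RainbowOmega k χ) = ((A + Bi) + (Bj + CC)) * (Nat.factorial χ * χ) := by
    have h0 : Fintype.card (RainbowOmega k χ)
        = ∑ S : {S : Finset (Fin k) // S.card = χ},
            Fintype.card (({x : Fin k // x ∈ S.1} ≃ Fin χ) × Fin χ) :=
      Fintype.card_sigma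
    rw [h0, Finset.sum_congr rfl (fun S _ => hcardS S),
      ← Finset.sum_subtype P hmemP (fun _ => Nat.factorial χ * χ),
      hsplit (fun _ => Nat.factorial χ * χ),
      Finset.sum_const, Finset.sum_const, Finset.sum_const, Finset.sum_const,
      smul_eq_mul, smul_eq_mul, smul_eq_mul, smul_eq_mul]
    ring
  -- identify the counts
  have hA : A = CC * (χ - 1) := by
    rw [hAdef, hCdef, hP, cardA_lemma hχ2 hij, cardC_lemma hij, chooseAC hk hℓ hχ hχ2]
  have hB : Bi = Bj := by
    rw [hBidef, hBjdef, hP, cardB_lemma hij]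
  -- put everything together
  rw [hN, Finset.sum_congr rfl (fun S _ => hcnt S), ← hsubty, hsplit F,
    hsum1, hsum2, hsum3, hsum4, hΩ]
  -- final arithmetic
  obtain ⟨c, hc⟩ : ∃ c, χ = c + 2 := ⟨χ - 2, by omega⟩
  have e1 : χ - 1 = c + 1 := by omega
  have e2 : χ - 2 = c := by omega
  have e3 : Nat.factorial (χ - 1) = (c + 1) * Nat.factorial c := by
    rw [e1, Nat.factorial_succ]
  have e4 : Nat.factorial χ = (c + 2) * ((c + 1) * Nat.factorial c) := by
    rw [hc, Nat.factorial_succ, Nat.factorial_succ]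
  by_cases hab : a = b
  · rw [if_pos hab, if_pos hab, hA, hB, e3, e4, e1, hc]
    ring
  · rw [if_neg hab, if_neg hab, hA, hB, e2, e3, e4, e1, hc]
    ring
end
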